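/- The map f : OT^Δ × NT^{Δ+} → UT^Δ defined by f(O, N) = O·exp(N) is a bijection. Equivalently, every U ∈ UT^Δ admits a unique factorization U = O·R with O ∈ OT^Δ Δ-orthogonal and R ∈ ST^Δ Δ-symmetric. -/

import Mathlib

/-!
If `U = O R` with `φ(O) = O⁻¹` and `φ(R) = R`, then `φ(U) U = R φ(O) O R = R²`. So `R` must be a
unipotent square root of the unipotent `φ`-fixed matrix `S = φ(U) U`, and then `O = U R⁻¹`
(conversely this `O` is `Δ`-orthogonal). Such a square root exists and is unique, by filtering
matrices by how far below the diagonal they are supported: Newton's iteration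
`R ↦ R + (S - R²) / 2` gains one level of depth per step and commutes with `φ`, and if two
unipotent square roots agree up to depth `m`, then `2 (R₁ - R₂)` is a sum of products of
`R₁ - R₂` with strictly lower-triangular matrices, so they agree up to depth `m + 1`.
-/

open Matrix

def UnipLT {n : ℕ} {K : Type*} [Field K] (M : Matrix (Fin n) (Fin n) K) : Prop :=
  (∀ i, M i i = 1) ∧ ∀ i j : Fin n, i < j → M i j = 0

noncomputable def phiD {n : ℕ} {K : Type*} [Field K]
    (Δ M : Matrix (Fin n) (Fin n) K) : Matrix (Fin n) (Fin n) K :=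
  Δ * Mᵀ * Δ⁻¹

namespace Matrix

variable {n : ℕ} {α : Type*} [Semiring α]

def subdiag (m : ℕ) : Submodule α (Matrix (Fin n) (Fin n) α) where
  carrier := {M | ∀ i j : Fin n, (i : ℕ) < j + m → M i j = 0}
  add_mem' hM hN i j h := by simp [hM i j h, hN i j h]
  zero_mem' _ _ _ := rfl
  smul_mem' c M hM i j h := by simp [hM i j h]

variable {a b : ℕ} {M N : Matrix (Fin n) (Fin n) α}

theorem subdiag_antitone : Antitone (subdiag (n := n) (α := α)) :=
  fun _ _ hab _ hM i j h => hM i j (by omega)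

theorem mul_mem_subdiag (hM : M ∈ subdiag a) (hN : N ∈ subdiag b) :
    M * N ∈ subdiag (a + b) := by
  intro i j h
  rw [mul_apply]
  refine Finset.sum_eq_zero fun k _ => ?_
  by_cases hk : (i : ℕ) < k + a
  · rw [hM i k hk, zero_mul]
  · rw [hN k j (by omega), mul_zero]

theorem mul_mem_subdiag_of_le {c : ℕ} (hM : M ∈ subdiag a) (hN : N ∈ subdiag b)
    (hc : c ≤ a + b) : M * N ∈ subdiag c :=
  subdiag_antitone hc (mul_mem_subdiag hM hN)

theorem pow_mem_subdiag (hM : M ∈ subdiag 1) : ∀ k, M ^ k ∈ subdiag k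
  | 0 => fun i j h => by rw [pow_zero, one_apply_ne (by omega)]
  | k + 1 => by rw [pow_succ]; exact mul_mem_subdiag (pow_mem_subdiag hM k) hM

theorem eq_zero_of_mem_subdiag (hM : M ∈ subdiag n) : M = 0 :=
  ext fun i j => hM i j (by omega)

end Matrix

section Unipotent

variable {n : ℕ} {K : Type*} [Field K] {A B M : Matrix (Fin n) (Fin n) K}

theorem unipLT_iff_sub_one_mem_subdiag : UnipLT M ↔ M - 1 ∈ subdiag 1 := by
  refine ⟨fun ⟨hdiag, hupper⟩ i j h => ?_, fun h => ⟨fun i => ?_, fun i j hij => ?_⟩⟩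
  · rcases (show (i : ℕ) ≤ j by omega).lt_or_eq with hij | hij
    · simp [hupper i j hij, one_apply_ne (Fin.ne_of_lt hij)]
    · simp [Fin.ext hij, hdiag j]
  · simpa [sub_eq_zero] using h i i (by omega)
  · simpa [sub_eq_zero, one_apply_ne (Fin.ne_of_lt hij)] using h i j (by omega)

theorem UnipLT.mul (hA : UnipLT A) (hB : UnipLT B) : UnipLT (A * B) := by
  rw [unipLT_iff_sub_one_mem_subdiag] at *
  have hAB : A * B - 1 = (A - 1) * (B - 1) + (A - 1) + (B - 1) := by noncomm_ring
  rw [hAB]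
  exact add_mem (add_mem (mul_mem_subdiag_of_le hA hB (by omega)) hA) hB

theorem UnipLT.one_sub_mem_subdiag (hM : UnipLT M) : 1 - M ∈ subdiag 1 := by
  simpa using neg_mem (unipLT_iff_sub_one_mem_subdiag.mp hM)

theorem UnipLT.mul_geom_sum (hM : UnipLT M) :
    M * ∑ k ∈ Finset.range n, (1 - M) ^ k = 1 := by
  simpa [eq_zero_of_mem_subdiag (pow_mem_subdiag hM.one_sub_mem_subdiag n)] using
    mul_neg_geom_sum (1 - M) n

theorem UnipLT.isUnit_det (hM : UnipLT M) : IsUnit M.det :=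
  isUnit_det_of_right_inverse hM.mul_geom_sum

theorem UnipLT.inv (hM : UnipLT M) : UnipLT M⁻¹ := by
  have hN := hM.one_sub_mem_subdiag
  have hG : M⁻¹ ∈ subdiag 0 := by
    rw [inv_eq_right_inv hM.mul_geom_sum]
    exact Submodule.sum_mem _ fun k _ => subdiag_antitone (Nat.zero_le k) (pow_mem_subdiag hN k)
  have hsub : M⁻¹ - 1 = (1 - M) * M⁻¹ := by
    rw [sub_mul, one_mul, mul_nonsing_inv M hM.isUnit_det]
  rw [unipLT_iff_sub_one_mem_subdiag, hsub]
  exact mul_mem_subdiag hN hG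

end Unipotent

section Phi

variable {n : ℕ} {K : Type*} [Field K] {Δ : Matrix (Fin n) (Fin n) K}

theorem phiD_one (hΔ : IsUnit Δ.det) : phiD Δ 1 = 1 := by
  simp [phiD, mul_nonsing_inv Δ hΔ]

theorem phiD_mul (hΔ : IsUnit Δ.det) (A B : Matrix (Fin n) (Fin n) K) :
    phiD Δ (A * B) = phiD Δ B * phiD Δ A := by
  simp only [phiD, transpose_mul, Matrix.mul_assoc, nonsing_inv_mul_cancel_left Δ _ hΔ]

theorem phiD_add (A B : Matrix (Fin n) (Fin n) K) :
    phiD Δ (A + B) = phiD Δ A + phiD Δ B := by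
  simp [phiD, Matrix.mul_add, Matrix.add_mul]

theorem phiD_sub (A B : Matrix (Fin n) (Fin n) K) :
    phiD Δ (A - B) = phiD Δ A - phiD Δ B := by
  simp [phiD, Matrix.mul_sub, Matrix.sub_mul]

theorem phiD_smul (c : K) (A : Matrix (Fin n) (Fin n) K) :
    phiD Δ (c • A) = c • phiD Δ A := by
  simp [phiD]

theorem phiD_phiD (hΔ : IsUnit Δ.det) (hsym : Δᵀ = Δ ∨ Δᵀ = -Δ)
    (M : Matrix (Fin n) (Fin n) K) : phiD Δ (phiD Δ M) = M := by
  have hneg : (-Δ)⁻¹ = -Δ⁻¹ := inv_eq_right_inv (by rw [neg_mul_neg, mul_nonsing_inv Δ hΔ])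
  rcases hsym with h | h <;>
    simp [phiD, transpose_nonsing_inv, h, hneg, Matrix.mul_assoc, mul_nonsing_inv Δ hΔ,
      mul_nonsing_inv_cancel_left Δ _ hΔ]

end Phi

section Sqrt

variable {n : ℕ} {K : Type*} [Field K] {Δ S : Matrix (Fin n) (Fin n) K}

noncomputable def newtonSqrt (S : Matrix (Fin n) (Fin n) K) : ℕ → Matrix (Fin n) (Fin n) K
  | 0 => 1
  | m + 1 => newtonSqrt S m + (2⁻¹ : K) • (S - newtonSqrt S m * newtonSqrt S m)

theorem phiD_newtonSqrt (hΔ : IsUnit Δ.det) (hS : phiD Δ S = S) :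
    ∀ m, phiD Δ (newtonSqrt S m) = newtonSqrt S m
  | 0 => phiD_one hΔ
  | m + 1 => by
    simp only [newtonSqrt, phiD_add, phiD_smul, phiD_sub, phiD_mul hΔ, hS,
      phiD_newtonSqrt hΔ hS m]

variable [NeZero (2 : K)]

theorem newtonSqrt_mem_subdiag (hS : UnipLT S) (m : ℕ) :
    newtonSqrt S m - 1 ∈ subdiag 1 ∧
      S - newtonSqrt S m * newtonSqrt S m ∈ subdiag (m + 1) := by
  induction m with
  | zero => simpa [newtonSqrt] using unipLT_iff_sub_one_mem_subdiag.mp hS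
  | succ m ih =>
    obtain ⟨hR, hE⟩ := ih
    set R := newtonSqrt S m
    set H : Matrix (Fin n) (Fin n) K := (2⁻¹ : K) • (S - R * R) with hH_def
    have hH : H ∈ subdiag (m + 1) := Submodule.smul_mem _ _ hE
    have hHH : H + H = S - R * R := by
      rw [← two_smul K H, hH_def, smul_smul, mul_inv_cancel₀ two_ne_zero, one_smul]
    -- the new error is quadratic in the correction `H`, hence one level deeper
    have hE' : S - (R + H) * (R + H) = -((R - 1) * H + H * (R - 1) + H * H) := by
      rw [show S = R * R + (H + H) by rw [hHH]; abel]
      noncomm_ring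
    refine ⟨?_, ?_⟩
    · rw [show newtonSqrt S (m + 1) - 1 = (R - 1) + H from add_sub_right_comm _ _ _]
      exact add_mem hR (subdiag_antitone (by omega) hH)
    · rw [show newtonSqrt S (m + 1) = R + H from rfl, hE']
      exact neg_mem (add_mem (add_mem (mul_mem_subdiag_of_le hR hH (by omega))
        (mul_mem_subdiag_of_le hH hR (by omega))) (mul_mem_subdiag_of_le hH hH (by omega)))

theorem exists_unipLT_sqrt (hΔ : IsUnit Δ.det) (hS : UnipLT S) (hφS : phiD Δ S = S) :
    ∃ R, UnipLT R ∧ phiD Δ R = R ∧ R * R = S := by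
  obtain ⟨hR, hE⟩ := newtonSqrt_mem_subdiag hS n
  refine ⟨newtonSqrt S n, unipLT_iff_sub_one_mem_subdiag.mpr hR, phiD_newtonSqrt hΔ hφS n, ?_⟩
  exact (sub_eq_zero.mp (eq_zero_of_mem_subdiag (subdiag_antitone (by omega) hE))).symm

theorem UnipLT.eq_of_mul_self_eq {R₁ R₂ : Matrix (Fin n) (Fin n) K} (h₁ : UnipLT R₁)
    (h₂ : UnipLT R₂) (h : R₁ * R₁ = R₂ * R₂) : R₁ = R₂ := by
  rw [unipLT_iff_sub_one_mem_subdiag] at h₁ h₂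
  suffices hD : ∀ m, R₁ - R₂ ∈ subdiag (m + 1) from
    sub_eq_zero.mp (eq_zero_of_mem_subdiag (subdiag_antitone (by omega) (hD n)))
  intro m
  induction m with
  | zero => simpa using sub_mem h₁ h₂
  | succ m ih =>
    have h2D : (2 : K) • (R₁ - R₂) =
        (R₁ * R₁ - R₂ * R₂) - ((R₁ - 1) * (R₁ - R₂) + (R₁ - R₂) * (R₂ - 1)) := by
      rw [two_smul]
      noncomm_ring
    rw [← Submodule.smul_mem_iff _ (two_ne_zero : (2 : K) ≠ 0), h2D, h, sub_self, zero_sub]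
    exact neg_mem (add_mem (mul_mem_subdiag_of_le h₁ ih (by omega))
      (mul_mem_subdiag_of_le ih h₂ (by omega)))

end Sqrt

theorem phiD_eq_inv_iff_mul_self_eq {n : ℕ} {K : Type*} [Field K]
    {Δ O R : Matrix (Fin n) (Fin n) K} (hΔ : IsUnit Δ.det) (hO : IsUnit O.det)
    (hR : IsUnit R.det) (hφR : phiD Δ R = R) :
    phiD Δ O = O⁻¹ ↔ R * R = phiD Δ (O * R) * (O * R) := by
  have hR' : IsUnit R := (isUnit_iff_isUnit_det R).mpr hR
  rw [show phiD Δ (O * R) * (O * R) = R * (phiD Δ O * O) * R by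
    rw [phiD_mul hΔ, hφR]; simp only [Matrix.mul_assoc]]
  constructor
  · intro h
    rw [h, nonsing_inv_mul O hO, Matrix.mul_one]
  · intro h
    refine (inv_eq_left_inv ?_).symm
    have h1 : R * 1 * R = R * (phiD Δ O * O) * R := by rwa [Matrix.mul_one]
    exact (hR'.mul_left_cancel (hR'.mul_right_cancel h1)).symm

/-- every U ∈ UT^Δ admits a unique factorization U = O·R with
O Δ-orthogonal and R Δ-symmetric (both unipotent lower-triangular). -/
theorem UTD_unique_OR_factorization {n : ℕ} {K : Type*} [Field K] [CharZero K]
    (Δ : Matrix (Fin n) (Fin n) K) (hdet : IsUnit Δ.det)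
    (hsym : Δᵀ = Δ ∨ Δᵀ = -Δ)
    (U : Matrix (Fin n) (Fin n) K) (hU : UnipLT U) (hU' : UnipLT (phiD Δ U)) :
    ∃! p : Matrix (Fin n) (Fin n) K × Matrix (Fin n) (Fin n) K,
      (UnipLT p.1 ∧ phiD Δ p.1 = p.1⁻¹) ∧
      (UnipLT p.2 ∧ phiD Δ p.2 = p.2) ∧
      U = p.1 * p.2 := by
  have hφS : phiD Δ (phiD Δ U * U) = phiD Δ U * U := by
    rw [phiD_mul hdet, phiD_phiD hdet hsym]
  obtain ⟨R, hR, hφR, hRR⟩ := exists_unipLT_sqrt hdet (hU'.mul hU) hφS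
  have hUR : U * R⁻¹ * R = U := nonsing_inv_mul_cancel_right R U hR.isUnit_det
  refine ⟨(U * R⁻¹, R), ⟨⟨hU.mul hR.inv, ?_⟩, ⟨hR, hφR⟩, hUR.symm⟩, ?_⟩
  · rw [phiD_eq_inv_iff_mul_self_eq hdet (hU.mul hR.inv).isUnit_det hR.isUnit_det hφR, hUR, hRR]
  · rintro ⟨O', R'⟩ ⟨⟨hO', hφO'⟩, ⟨hR', hφR'⟩, rfl⟩
    rw [phiD_eq_inv_iff_mul_self_eq hdet hO'.isUnit_det hR'.isUnit_det hφR', ← hRR] at hφO'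
    obtain rfl := hR'.eq_of_mul_self_eq hR hφO'
    rw [mul_nonsing_inv_cancel_right _ _ hR.isUnit_det]
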